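/- For every g ∈ SL₂(ℝ) and every x ∈ ℝ with g·x ≠ ∞ (i.e. cx + d ≠ 0), there exists a piecewise-projective homeomorphism h of ℝ which coincides with the projective action of g on a neighbourhood of x. Moreover, h can be taken in H(A) whenever A < ℝ is a unital subring containing the coefficients of g. -/

import Mathlib

open Matrix Filter Topology MeasureTheory

noncomputable section

/-- The group of homeomorphisms of a topological space, under composition. -/
instance Homeomorph.instGroupPP {X : Type*} [TopologicalSpace X] : Group (X ≃ₜ X) where
  mul a b := b.trans a
  one := Homeomorph.refl X
  inv := Homeomorph.symm
  mul_assoc a b c := Homeomorph.ext fun _ => rfl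
  one_mul a := Homeomorph.ext fun _ => rfl
  mul_one a := Homeomorph.ext fun _ => rfl
  inv_mul_cancel a := Homeomorph.ext fun x => a.symm_apply_apply x

@[simp] lemma Homeomorph.mul_apply' {X : Type*} [TopologicalSpace X]
    (a b : X ≃ₜ X) (x : X) : (a * b) x = a (b x) := rfl

@[simp] lemma Homeomorph.inv_coe {X : Type*} [TopologicalSpace X]
    (a : X ≃ₜ X) : (a⁻¹ : X ≃ₜ X) = a.symm := rfl

abbrev SL2 (R : Type*) [CommRing R] := Matrix.SpecialLinearGroup (Fin 2) R

namespace PP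

/-- Denominator of the Möbius transformation attached to `g`. -/
def mdenom (g : SL2 ℝ) (x : ℝ) : ℝ := g.1 1 0 * x + g.1 1 1

/-- The Möbius transformation attached to `g`. -/
def moebius (g : SL2 ℝ) (x : ℝ) : ℝ := (g.1 0 0 * x + g.1 0 1) / (g.1 1 0 * x + g.1 1 1)

/-- `g` is a local (projective) piece of the homeomorphism `h` at the point `x`. -/
def IsLocalPiece (h : ℝ ≃ₜ ℝ) (g : SL2 ℝ) (x : ℝ) : Prop :=
  mdenom g x ≠ 0 ∧ ∀ᶠ y in 𝓝 x, h y = moebius g y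

/-- `h` is piecewise given by Möbius transformations of matrices in `M`:
outside of a finite set of breakpoints, `h` is locally a Möbius map from `M`. -/
def IsPiecewiseIn (M : Set (SL2 ℝ)) (h : ℝ ≃ₜ ℝ) : Prop :=
  ∃ B : Finset ℝ, ∀ x ∉ B, ∃ g ∈ M, IsLocalPiece h g x

/-- A breakpoint of `h` : a point where `h` is not locally projective. -/
def IsBreakpoint (h : ℝ ≃ₜ ℝ) (x : ℝ) : Prop := ¬ ∃ g : SL2 ℝ, IsLocalPiece h g x

/-- Matrices with entries in the subring `A`. -/
def entriesIn (A : Subring ℝ) : Set (SL2 ℝ) := {g | ∀ i j, g.1 i j ∈ A}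

lemma one_entriesIn (A : Subring ℝ) : (1 : SL2 ℝ) ∈ entriesIn A := by
  intro i j
  by_cases h : i = j <;>
    simp [entriesIn, Matrix.SpecialLinearGroup.coe_one, Matrix.one_apply, h, A.one_mem, A.zero_mem]

lemma mul_entriesIn {A : Subring ℝ} {g₁ g₂ : SL2 ℝ} (h₁ : g₁ ∈ entriesIn A)
    (h₂ : g₂ ∈ entriesIn A) : g₁ * g₂ ∈ entriesIn A := by
  intro i j
  rw [Matrix.SpecialLinearGroup.coe_mul, Matrix.mul_apply]
  exact Subring.sum_mem A fun k _ => A.mul_mem (h₁ i k) (h₂ k j)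

lemma inv_entriesIn {A : Subring ℝ} {g : SL2 ℝ} (h : g ∈ entriesIn A) :
    g⁻¹ ∈ entriesIn A := by
  intro i j
  have : (g⁻¹ : SL2 ℝ).1 = (g.1).adjugate := Matrix.SpecialLinearGroup.coe_inv g
  rw [this, Matrix.adjugate_fin_two]
  fin_cases i <;> fin_cases j <;>
    simp [Matrix.cons_val_zero, Matrix.cons_val_one] <;>
    first
      | exact h 1 1
      | exact h 0 1
      | exact h 1 0
      | exact A.neg_mem (h 0 1)
      | exact A.neg_mem (h 1 0)
      | exact h 0 0

lemma det_eq (g : SL2 ℝ) : g.1 0 0 * g.1 1 1 - g.1 0 1 * g.1 1 0 = 1 := by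
  have := g.2
  rwa [Matrix.det_fin_two] at this

/-- Composition of Möbius transformations (denominator part). -/
lemma mdenom_mul (g₁ g₂ : SL2 ℝ) (x : ℝ) (h₂ : mdenom g₂ x ≠ 0) :
    mdenom (g₁ * g₂) x = mdenom g₁ (moebius g₂ x) * mdenom g₂ x := by
  unfold mdenom moebius at *
  rw [Matrix.SpecialLinearGroup.coe_mul, Matrix.mul_apply, Matrix.mul_apply, Fin.sum_univ_two,
    Fin.sum_univ_two]
  field_simp
  ring

lemma mdenom_mul_ne (g₁ g₂ : SL2 ℝ) (x : ℝ) (h₂ : mdenom g₂ x ≠ 0)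
    (h₁ : mdenom g₁ (moebius g₂ x) ≠ 0) : mdenom (g₁ * g₂) x ≠ 0 := by
  rw [mdenom_mul g₁ g₂ x h₂]; exact mul_ne_zero h₁ h₂

lemma moebius_mul (g₁ g₂ : SL2 ℝ) (x : ℝ) (h₂ : mdenom g₂ x ≠ 0)
    (h₁ : mdenom g₁ (moebius g₂ x) ≠ 0) :
    moebius (g₁ * g₂) x = moebius g₁ (moebius g₂ x) := by
  have hden := mdenom_mul_ne g₁ g₂ x h₂ h₁
  unfold mdenom moebius at *
  simp only [Matrix.SpecialLinearGroup.coe_mul, Matrix.mul_apply, Fin.sum_univ_two] at *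
  rw [div_eq_div_iff hden h₁]
  field_simp
  ring

lemma inv_entry_00 (g : SL2 ℝ) : (g⁻¹ : SL2 ℝ).1 0 0 = g.1 1 1 := by
  simp [Matrix.SpecialLinearGroup.coe_inv, Matrix.adjugate_fin_two]
lemma inv_entry_01 (g : SL2 ℝ) : (g⁻¹ : SL2 ℝ).1 0 1 = -g.1 0 1 := by
  simp [Matrix.SpecialLinearGroup.coe_inv, Matrix.adjugate_fin_two]
lemma inv_entry_10 (g : SL2 ℝ) : (g⁻¹ : SL2 ℝ).1 1 0 = -g.1 1 0 := by
  simp [Matrix.SpecialLinearGroup.coe_inv, Matrix.adjugate_fin_two]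
lemma inv_entry_11 (g : SL2 ℝ) : (g⁻¹ : SL2 ℝ).1 1 1 = g.1 0 0 := by
  simp [Matrix.SpecialLinearGroup.coe_inv, Matrix.adjugate_fin_two]

lemma moebius_one (x : ℝ) : moebius 1 x = x := by
  unfold moebius
  simp [Matrix.SpecialLinearGroup.coe_one, Matrix.one_apply]

lemma mdenom_one (x : ℝ) : mdenom 1 x = 1 := by
  unfold mdenom
  simp [Matrix.SpecialLinearGroup.coe_one, Matrix.one_apply]

lemma mdenom_inv (g : SL2 ℝ) (x : ℝ) (h : mdenom g x ≠ 0) :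
    mdenom g⁻¹ (moebius g x) = 1 / mdenom g x := by
  have hdet := det_eq g
  unfold mdenom moebius at *
  rw [inv_entry_10, inv_entry_11]
  field_simp
  linear_combination hdet

lemma moebius_inv (g : SL2 ℝ) (x : ℝ) (h : mdenom g x ≠ 0) :
    mdenom g⁻¹ (moebius g x) ≠ 0 ∧ moebius g⁻¹ (moebius g x) = x := by
  have h1 : mdenom g⁻¹ (moebius g x) = 1 / mdenom g x := mdenom_inv g x h
  have hne : mdenom g⁻¹ (moebius g x) ≠ 0 := by rw [h1]; exact one_div_ne_zero h
  refine ⟨hne, ?_⟩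
  rw [← moebius_mul g⁻¹ g x h hne, inv_mul_cancel, moebius_one]

lemma mdenom_continuous (g : SL2 ℝ) : Continuous (mdenom g) := by
  unfold mdenom; fun_prop

lemma eventually_mdenom_ne (g : SL2 ℝ) {x : ℝ} (h : mdenom g x ≠ 0) :
    ∀ᶠ y in 𝓝 x, mdenom g y ≠ 0 :=
  (mdenom_continuous g).continuousAt.eventually_ne h

lemma IsLocalPiece.mul {a b : ℝ ≃ₜ ℝ} {g₁ g₂ : SL2 ℝ} {x : ℝ}
    (h₁ : IsLocalPiece a g₁ (b x)) (h₂ : IsLocalPiece b g₂ x) :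
    IsLocalPiece (a * b) (g₁ * g₂) x := by
  obtain ⟨d₂, e₂⟩ := h₂
  obtain ⟨d₁, e₁⟩ := h₁
  have hbx : b x = moebius g₂ x := e₂.self_of_nhds
  have d₁' : mdenom g₁ (moebius g₂ x) ≠ 0 := hbx ▸ d₁
  refine ⟨mdenom_mul_ne g₁ g₂ x d₂ d₁', ?_⟩
  have hmap : ∀ᶠ y in 𝓝 x, a (b y) = moebius g₁ (b y) := by
    have hb : Filter.map b (𝓝 x) = 𝓝 (b x) := b.map_nhds_eq x
    rw [← hb] at e₁
    exact e₁
  have hd1ev : ∀ᶠ y in 𝓝 x, mdenom g₁ (b y) ≠ 0 := by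
    have hb : Filter.map b (𝓝 x) = 𝓝 (b x) := b.map_nhds_eq x
    have := eventually_mdenom_ne g₁ d₁
    rw [← hb] at this
    exact this
  filter_upwards [e₂, hmap, hd1ev, eventually_mdenom_ne g₂ d₂] with y hy₂ hy₁ hyd₁ hyd₂
  have hyd₁' : mdenom g₁ (moebius g₂ y) ≠ 0 := by rw [← hy₂]; exact hyd₁
  calc (a * b) y = a (b y) := rfl
    _ = moebius g₁ (b y) := hy₁
    _ = moebius g₁ (moebius g₂ y) := by rw [hy₂]
    _ = moebius (g₁ * g₂) y := (moebius_mul g₁ g₂ y hyd₂ hyd₁').symm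

lemma IsLocalPiece.inv {h : ℝ ≃ₜ ℝ} {g : SL2 ℝ} {x : ℝ} (hp : IsLocalPiece h g x) :
    IsLocalPiece h⁻¹ g⁻¹ (h x) := by
  obtain ⟨d, e⟩ := hp
  have hx : h x = moebius g x := e.self_of_nhds
  refine ⟨by rw [hx]; exact (moebius_inv g x d).1, ?_⟩
  have hb : Filter.map h (𝓝 x) = 𝓝 (h x) := h.map_nhds_eq x
  rw [← hb, Filter.eventually_map]
  filter_upwards [e, eventually_mdenom_ne g d] with y hy hyd
  calc (h⁻¹ : ℝ ≃ₜ ℝ) (h y) = y := h.symm_apply_apply y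
    _ = moebius g⁻¹ (h y) := by rw [hy]; exact ((moebius_inv g y hyd).2).symm

lemma isLocalPiece_one (x : ℝ) : IsLocalPiece 1 1 x := by
  refine ⟨by rw [mdenom_one]; exact one_ne_zero, ?_⟩
  filter_upwards with y
  rw [moebius_one]
  rfl

/-- The group of piecewise-`SL₂(A)` homeomorphisms of the real line. -/
def PW (A : Subring ℝ) : Subgroup (ℝ ≃ₜ ℝ) where
  carrier := {h | IsPiecewiseIn (entriesIn A) h}
  one_mem' := ⟨∅, fun x _ => ⟨1, one_entriesIn A, isLocalPiece_one x⟩⟩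
  mul_mem' := by
    rintro a b ⟨Ba, hBa⟩ ⟨Bb, hBb⟩
    refine ⟨Bb ∪ Ba.image b.symm, fun x hx => ?_⟩
    rw [Finset.mem_union, not_or] at hx
    obtain ⟨hxb, hxa⟩ := hx
    obtain ⟨g₂, hg₂A, hg₂⟩ := hBb x hxb
    have hbx : b x ∉ Ba := by
      intro hmem
      exact hxa (Finset.mem_image.2 ⟨b x, hmem, b.symm_apply_apply x⟩)
    obtain ⟨g₁, hg₁A, hg₁⟩ := hBa (b x) hbx
    exact ⟨g₁ * g₂, mul_entriesIn hg₁A hg₂A, hg₁.mul hg₂⟩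
  inv_mem' := by
    rintro h ⟨B, hB⟩
    refine ⟨B.image h, fun y hy => ?_⟩
    have hxB : h.symm y ∉ B := by
      intro hmem
      exact hy (Finset.mem_image.2 ⟨h.symm y, hmem, h.apply_symm_apply y⟩)
    obtain ⟨g, hgA, hg⟩ := hB (h.symm y) hxB
    have := hg.inv
    rw [h.apply_symm_apply y] at this
    exact ⟨g⁻¹, inv_entriesIn hgA, this⟩

/-- Real fixed points of hyperbolic elements of `SL₂(A)`. -/
def FixHyp (A : Subring ℝ) : Set ℝ :=
  {x | ∃ g : SL2 ℝ, g ∈ entriesIn A ∧ |Matrix.trace g.1| > 2 ∧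
        mdenom g x ≠ 0 ∧ moebius g x = x}

lemma trace_conj (g q : SL2 ℝ) :
    Matrix.trace ((g⁻¹ * q * g : SL2 ℝ) : Matrix (Fin 2) (Fin 2) ℝ) = Matrix.trace q.1 := by
  rw [Matrix.SpecialLinearGroup.coe_mul, Matrix.SpecialLinearGroup.coe_mul,
    Matrix.trace_mul_comm, ← Matrix.mul_assoc, ← Matrix.SpecialLinearGroup.coe_mul,
    mul_inv_cancel, Matrix.SpecialLinearGroup.coe_one, Matrix.one_mul]

lemma FixHyp.conj {A : Subring ℝ} {g : SL2 ℝ} {x : ℝ} (hgA : g ∈ entriesIn A)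
    (hd : mdenom g x ≠ 0) (hfix : moebius g x ∈ FixHyp A) : x ∈ FixHyp A := by
  obtain ⟨q, hqA, hqtr, hqd, hqfix⟩ := hfix
  refine ⟨g⁻¹ * q * g, mul_entriesIn (mul_entriesIn (inv_entriesIn hgA) hqA) hgA,
    by rw [trace_conj]; exact hqtr, ?_, ?_⟩
  all_goals
    have hden1 : mdenom (q * g) x ≠ 0 := mdenom_mul_ne q g x hd hqd
    have hmo1 : moebius (q * g) x = moebius g x := by
      rw [moebius_mul q g x hd hqd, hqfix]
    have hden2 : mdenom g⁻¹ (moebius (q * g) x) ≠ 0 := by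
      rw [hmo1]; exact (moebius_inv g x hd).1
  · rw [mul_assoc]
    exact mdenom_mul_ne g⁻¹ (q * g) x hden1 hden2
  · rw [mul_assoc, moebius_mul g⁻¹ (q * g) x hden1 hden2, hmo1]
    exact (moebius_inv g x hd).2

/-- `h` is locally an `SL₂(A)`-Möbius map away from the set `Φ`. -/
def LocallyIn (A : Subring ℝ) (Φ : Set ℝ) (h : ℝ ≃ₜ ℝ) : Prop :=
  ∀ x : ℝ, x ∉ Φ → ∃ g ∈ entriesIn A, IsLocalPiece h g x

/-- The complement of `Φ` is invariant under Möbius maps with entries in `A`. -/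
def MoebiusInv (A : Subring ℝ) (Φ : Set ℝ) : Prop :=
  ∀ g ∈ entriesIn A, ∀ x : ℝ, mdenom g x ≠ 0 → x ∉ Φ → moebius g x ∉ Φ

lemma LocallyIn.mul {A : Subring ℝ} {Φ : Set ℝ} (hΦ : MoebiusInv A Φ) {a b : ℝ ≃ₜ ℝ}
    (ha : LocallyIn A Φ a) (hb : LocallyIn A Φ b) : LocallyIn A Φ (a * b) := by
  intro x hx
  obtain ⟨g₂, hg₂A, hg₂⟩ := hb x hx
  have hbx : b x ∉ Φ := by
    have : b x = moebius g₂ x := hg₂.2.self_of_nhds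
    rw [this]
    exact hΦ g₂ hg₂A x hg₂.1 hx
  obtain ⟨g₁, hg₁A, hg₁⟩ := ha (b x) hbx
  exact ⟨g₁ * g₂, mul_entriesIn hg₁A hg₂A, hg₁.mul hg₂⟩

/-- The group of piecewise-`SL₂(A)` homeomorphisms of the line all of whose
breakpoints lie in the set `Φ`. -/
def BreakIn (A : Subring ℝ) (Φ : Set ℝ) (hΦ : MoebiusInv A Φ) : Subgroup (ℝ ≃ₜ ℝ) where
  carrier := {h | IsPiecewiseIn (entriesIn A) h ∧ LocallyIn A Φ h ∧ LocallyIn A Φ h⁻¹}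
  one_mem' := by
    refine ⟨(PW A).one_mem', ?_, ?_⟩ <;>
      · intro x _
        exact ⟨1, one_entriesIn A, isLocalPiece_one x⟩
  mul_mem' := by
    rintro a b ⟨hapw, ha, ha'⟩ ⟨hbpw, hb, hb'⟩
    refine ⟨(PW A).mul_mem' hapw hbpw, LocallyIn.mul hΦ ha hb, ?_⟩
    rw [_root_.mul_inv_rev]
    exact LocallyIn.mul hΦ hb' ha'
  inv_mem' := by
    rintro h ⟨hpw, h₁, h₂⟩
    refine ⟨(PW A).inv_mem' hpw, h₂, ?_⟩
    rw [inv_inv]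
    exact h₁

lemma fixHyp_moebiusInv (A : Subring ℝ) : MoebiusInv A (FixHyp A) :=
  fun g hg x hd hx hmem => hx (FixHyp.conj hg hd hmem)

/-- The group `H(A)`: piecewise-`SL₂(A)` homeomorphisms of the line whose
breakpoints are fixed points of hyperbolic elements of `SL₂(A)`. -/
def HGroup (A : Subring ℝ) : Subgroup (ℝ ≃ₜ ℝ) := BreakIn A (FixHyp A) (fixHyp_moebiusInv A)

/-- The ring `ℤ[1/S]` of `S`-integers, as a subring of `ℚ`. -/
def SIntQ (S : Set ℕ) : Subring ℚ := Subring.closure {x : ℚ | ∃ p ∈ S, x = (p : ℚ)⁻¹}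

/-- The ring `ℤ[1/S]` of `S`-integers, as a subring of `ℝ`. -/
def SIntR (S : Set ℕ) : Subring ℝ := Subring.closure {x : ℝ | ∃ p ∈ S, x = (p : ℝ)⁻¹}

/-- The group `Γ_S` of piecewise-`SL₂(ℤ[1/S])` homeomorphisms of the line. -/
def Gamma (S : Set ℕ) : Subgroup (ℝ ≃ₜ ℝ) := PW (SIntR S)

/-- `ℚ` as a subring of `ℝ`. -/
def ratSubring : Subring ℝ := (Rat.castHom ℝ).range

/-- `ℤ` as a subring of `ℝ`. -/
def intSubring : Subring ℝ := (Int.castRingHom ℝ).range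

/-- The group `H(ℚ)` of piecewise-`SL₂(ℚ)` homeomorphisms of the line. -/
def HQ : Subgroup (ℝ ≃ₜ ℝ) := PW ratSubring

lemma ratSubring_div_mem {x y : ℝ} (hx : x ∈ ratSubring) (hy : y ∈ ratSubring) :
    x / y ∈ ratSubring := by
  obtain ⟨q, rfl⟩ := RingHom.mem_range.1 hx
  obtain ⟨r, rfl⟩ := RingHom.mem_range.1 hy
  refine RingHom.mem_range.2 ⟨q / r, ?_⟩
  simp [Rat.cast_div]

lemma moebius_mem_rat {g : SL2 ℝ} (hg : g ∈ entriesIn ratSubring) {y : ℝ}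
    (hy : y ∈ ratSubring) : moebius g y ∈ ratSubring := by
  unfold moebius
  exact ratSubring_div_mem
    (ratSubring.add_mem (ratSubring.mul_mem (hg 0 0) hy) (hg 0 1))
    (ratSubring.add_mem (ratSubring.mul_mem (hg 1 0) hy) (hg 1 1))

lemma rat_moebiusInv {A : Subring ℝ} (hA : A ≤ ratSubring) :
    MoebiusInv A (ratSubring : Set ℝ) := by
  intro g hg x hd hx hmem
  apply hx
  have : moebius g⁻¹ (moebius g x) = x := (moebius_inv g x hd).2
  rw [← this]
  exact moebius_mem_rat (fun i j => hA (inv_entriesIn hg i j)) hmem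

lemma intSubring_le_rat : intSubring ≤ ratSubring := by
  rintro x ⟨n, rfl⟩
  refine RingHom.mem_range.2 ⟨(n : ℚ), ?_⟩
  simp

/-- Thompson's group `F` realized as `H_ℚ(ℤ)`: piecewise-`SL₂(ℤ)` homeomorphisms
of the line with rational breakpoints. -/
def Thompson : Subgroup (ℝ ≃ₜ ℝ) :=
  BreakIn intSubring (ratSubring : Set ℝ) (rat_moebiusInv intSubring_le_rat)

/-- The group `H_ℚ(ℚ)` of piecewise-`SL₂(ℚ)` homeomorphisms of the line with
rational breakpoints. -/
def HQrat : Subgroup (ℝ ≃ₜ ℝ) :=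
  BreakIn ratSubring (ratSubring : Set ℝ) (rat_moebiusInv le_rfl)

/-- A bounded real-valued function. -/
def Bdd {X : Type*} (f : X → ℝ) : Prop := ∃ C, ∀ x, |f x| ≤ C

/-- A mean: a normalized positive linear functional on bounded functions. -/
structure MeanOn (X : Type*) where
  toFun : (X → ℝ) → ℝ
  add' : ∀ f g : X → ℝ, Bdd f → Bdd g → toFun (f + g) = toFun f + toFun g
  smul' : ∀ (c : ℝ) (f : X → ℝ), Bdd f → toFun (c • f) = c * toFun f
  mono' : ∀ f g : X → ℝ, Bdd f → Bdd g → (∀ x, f x ≤ g x) → toFun f ≤ toFun g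
  one' : toFun (fun _ => 1) = 1

/-- A subgroup `H ≤ G` is co-amenable in `G` if there is a `G`-invariant mean on `G/H`. -/
def CoAmenableIn {G : Type*} [Group G] (H : Subgroup G) : Prop :=
  ∃ m : MeanOn (G ⧸ H), ∀ (g : G) (f : (G ⧸ H) → ℝ), Bdd f →
    m.toFun (fun x => f (g • x)) = m.toFun f

end PP

/-! Near `x`, `g = τ_t ∘ q` with `τ_t` the translation by an integer `t` and `q = τ_{-t} g`.
Taking `t` on the right side of `g x - x`, the fixed-point quadratic of `q` is negative at `x`
and positive at the pole of `g`, so `q` has fixed points `p₁ < x < p₂` with no pole between them.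
Hence `q` is hyperbolic and maps `[p₁, p₂]` increasingly onto itself; extended by the identity it
lies in `H(A)` with breakpoints `p₁, p₂`, and so does its composite with `τ_t`. An affine `g` is
itself a homeomorphism of the line. -/

open Set

theorem exists_homeomorph_eqOn_Icc {f : ℝ → ℝ} {a b : ℝ} (hab : a ≤ b)
    (hmono : StrictMonoOn f (Icc a b)) (hcont : ContinuousOn f (Icc a b))
    (ha : f a = a) (hb : f b = b) :
    ∃ k : ℝ ≃ₜ ℝ, EqOn k f (Icc a b) ∧ EqOn k id (Icc a b)ᶜ := by
  classical
  set F : ℝ → ℝ := fun y => if y ∈ Icc a b then f y else y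
  have hFin : EqOn F f (Icc a b) := fun y hy => if_pos hy
  have hFout : EqOn F id (Icc a b)ᶜ := fun y hy => if_neg hy
  have hFle : EqOn F id (Iic a) := fun y hy => by
    rcases (mem_Iic.1 hy).lt_or_eq with hy | rfl
    · exact hFout fun h => hy.not_ge h.1
    · exact (hFin (left_mem_Icc.2 hab)).trans ha
  have hFge : EqOn F id (Ici b) := fun y hy => by
    rcases (mem_Ici.1 hy).lt_or_eq with hy | rfl
    · exact hFout fun h => hy.not_ge h.2
    · exact (hFin (right_mem_Icc.2 hab)).trans hb
  have hFmono : StrictMono F := by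
    refine StrictMonoOn.Iic_union_Ici (a := a) (strictMono_id.strictMonoOn _ |>.congr hFle.symm) ?_
    rw [← Icc_union_Ici_eq_Ici hab]
    exact (hmono.congr hFin.symm).union (strictMono_id.strictMonoOn _ |>.congr hFge.symm)
      (isGreatest_Icc hab) isLeast_Ici
  have hFsurj : Function.Surjective F := by
    intro z
    by_cases hz : z ∈ Icc a b
    · obtain ⟨y, hy, rfl⟩ := intermediate_value_Icc hab hcont (by rwa [ha, hb])
      exact ⟨y, hFin hy⟩
    · exact ⟨z, hFout hz⟩
  exact ⟨(hFmono.orderIsoOfSurjective F hFsurj).toHomeomorph, hFin, hFout⟩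

theorem exists_factorization_of_quadratic_neg {α β γ x : ℝ} (hα : 0 < α)
    (hx : α * x ^ 2 + β * x + γ < 0) :
    ∃ p₁ p₂, p₁ < x ∧ x < p₂ ∧ ∀ y, α * y ^ 2 + β * y + γ = α * (y - p₁) * (y - p₂) := by
  set s := Real.sqrt (β ^ 2 - 4 * α * γ)
  have hs : s ^ 2 = β ^ 2 - 4 * α * γ := Real.sq_sqrt (by nlinarith [sq_nonneg (2 * α * x + β)])
  have hxs : |2 * α * x + β| < s := by
    apply abs_lt_of_sq_lt_sq _ (Real.sqrt_nonneg _)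
    nlinarith
  obtain ⟨h₁, h₂⟩ := abs_lt.1 hxs
  refine ⟨(-β - s) / (2 * α), (-β + s) / (2 * α), ?_, ?_, fun y => ?_⟩
  · rw [div_lt_iff₀ (by positivity)]; linarith
  · rw [lt_div_iff₀ (by positivity)]; linarith
  · field_simp
    linear_combination hs

namespace PP

lemma continuousOn_moebius {g : SL2 ℝ} {s : Set ℝ} (hs : ∀ y ∈ s, mdenom g y ≠ 0) :
    ContinuousOn (moebius g) s :=
  ContinuousOn.div (by fun_prop) (by fun_prop) hs

lemma injOn_moebius {g : SL2 ℝ} {s : Set ℝ} (hs : ∀ y ∈ s, mdenom g y ≠ 0) :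
    InjOn (moebius g) s := fun y hy y' hy' h => by
  rw [← (moebius_inv g y (hs y hy)).2, h, (moebius_inv g y' (hs y' hy')).2]

lemma isLocalPiece_of_eqOn {h : ℝ ≃ₜ ℝ} {g : SL2 ℝ} {s : Set ℝ} {x : ℝ} (hs : IsOpen s)
    (hx : x ∈ s) (hd : mdenom g x ≠ 0) (heq : EqOn h (moebius g) s) : IsLocalPiece h g x :=
  ⟨hd, eventually_of_mem (hs.mem_nhds hx) heq⟩

lemma mem_HGroup_of_isLocalPiece {A : Subring ℝ} {h : ℝ ≃ₜ ℝ} (S : Finset ℝ)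
    (hS : ∀ p ∈ S, p ∈ FixHyp A ∧ h p = p)
    (hloc : ∀ x ∉ S, ∃ g ∈ entriesIn A, IsLocalPiece h g x) : h ∈ HGroup A := by
  refine ⟨⟨S, hloc⟩, fun x hx => hloc x fun hxS => hx (hS x hxS).1, fun z hz => ?_⟩
  have hzS : h.symm z ∉ S := fun hmem => by
    obtain ⟨hfix, hp⟩ := hS _ hmem
    rw [h.apply_symm_apply] at hp
    exact hz (by rwa [hp])
  obtain ⟨g, hgA, hg⟩ := hloc _ hzS
  refine ⟨g⁻¹, inv_entriesIn hgA, ?_⟩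
  simpa using hg.inv

lemma mdenom_ne_zero_of_entry_one_zero {g : SL2 ℝ} (hc : g.1 1 0 = 0) (y : ℝ) :
    mdenom g y ≠ 0 := by
  have hdet := det_eq g
  rw [hc, mul_zero, sub_zero] at hdet
  rw [mdenom, hc, zero_mul, zero_add]
  exact right_ne_zero_of_mul_eq_one hdet

def affineHomeomorph (g : SL2 ℝ) (hc : g.1 1 0 = 0) : ℝ ≃ₜ ℝ where
  toFun := moebius g
  invFun := moebius g⁻¹
  left_inv y := (moebius_inv g y (mdenom_ne_zero_of_entry_one_zero hc y)).2
  right_inv z := by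
    have hc' : (g⁻¹).1 1 0 = 0 := by rw [inv_entry_10, hc, neg_zero]
    simpa using (moebius_inv g⁻¹ z (mdenom_ne_zero_of_entry_one_zero hc' z)).2
  continuous_toFun := continuousOn_univ.1 <|
    continuousOn_moebius fun y _ => mdenom_ne_zero_of_entry_one_zero hc y
  continuous_invFun := continuousOn_univ.1 <| continuousOn_moebius fun y _ =>
    mdenom_ne_zero_of_entry_one_zero (by rw [inv_entry_10, hc, neg_zero]) y

@[simp] lemma affineHomeomorph_apply (g : SL2 ℝ) (hc : g.1 1 0 = 0) (y : ℝ) :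
    affineHomeomorph g hc y = moebius g y := rfl

lemma affineHomeomorph_mem_HGroup {A : Subring ℝ} {g : SL2 ℝ} (hc : g.1 1 0 = 0)
    (hA : g ∈ entriesIn A) : affineHomeomorph g hc ∈ HGroup A :=
  mem_HGroup_of_isLocalPiece ∅ (by simp) fun x _ =>
    ⟨g, hA, isLocalPiece_of_eqOn isOpen_univ (mem_univ x)
      (mdenom_ne_zero_of_entry_one_zero hc x) fun _ _ => rfl⟩

def translation (t : ℝ) : SL2 ℝ := ⟨!![1, t; 0, 1], by simp⟩

lemma translation_entry_one_zero (t : ℝ) : (translation t).1 1 0 = 0 := rfl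

lemma translation_mem_entriesIn {A : Subring ℝ} {t : ℝ} (ht : t ∈ A) :
    translation t ∈ entriesIn A := by
  intro i j
  fin_cases i <;> fin_cases j <;> simp [translation, ht, A.one_mem, A.zero_mem]

lemma moebius_translation (t y : ℝ) : moebius (translation t) y = y + t := by
  simp [moebius, translation]

lemma translation_mul_entry_one (t : ℝ) (g : SL2 ℝ) (j : Fin 2) :
    (translation t * g).1 1 j = g.1 1 j := by
  rw [Matrix.SpecialLinearGroup.coe_mul]
  simp [translation, Matrix.mul_apply, Fin.sum_univ_two]

lemma mdenom_translation_mul (t : ℝ) (g : SL2 ℝ) (y : ℝ) :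
    mdenom (translation t * g) y = mdenom g y := by
  simp only [mdenom, translation_mul_entry_one]

lemma moebius_translation_mul (t : ℝ) {g : SL2 ℝ} {y : ℝ} (hy : mdenom g y ≠ 0) :
    moebius (translation t * g) y = moebius g y + t := by
  rw [moebius_mul _ _ _ hy (by simp [mdenom, translation]), moebius_translation]

lemma two_lt_abs_trace_of_fixedPoints {q : SL2 ℝ} (hc : q.1 1 0 ≠ 0) {p₁ p₂ : ℝ}
    (hp : p₁ ≠ p₂) (hd₁ : mdenom q p₁ ≠ 0) (hd₂ : mdenom q p₂ ≠ 0)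
    (hq₁ : moebius q p₁ = p₁) (hq₂ : moebius q p₂ = p₂) : 2 < |Matrix.trace q.1| := by
  have fixed_eq : ∀ p, mdenom q p ≠ 0 → moebius q p = p →
      q.1 1 0 * p ^ 2 + (q.1 1 1 - q.1 0 0) * p - q.1 0 1 = 0 := by
    intro p hd hp
    rw [mdenom] at hd
    rw [moebius, div_eq_iff hd] at hp
    linear_combination -hp
  have h₁ := fixed_eq p₁ hd₁ hq₁
  have h₂ := fixed_eq p₂ hd₂ hq₂
  have hsum : q.1 1 0 * (p₁ + p₂) = q.1 0 0 - q.1 1 1 :=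
    mul_left_cancel₀ (sub_ne_zero.2 hp) (by linear_combination h₁ - h₂)
  have hdisc : Matrix.trace q.1 ^ 2 - 2 ^ 2 = (q.1 1 0 * (p₁ - p₂)) ^ 2 := by
    rw [Matrix.trace_fin_two]
    linear_combination 4 * det_eq q - 4 * q.1 1 0 * h₁
      + (4 * q.1 1 0 * p₁ - (q.1 1 0 * (p₁ + p₂) + q.1 0 0 - q.1 1 1)) * hsum
  have hpos : 0 < (q.1 1 0 * (p₁ - p₂)) ^ 2 := by
    have := mul_ne_zero hc (sub_ne_zero.2 hp)
    positivity
  rw [← abs_two, ← sq_lt_sq]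
  linarith

lemma exists_mem_HGroup_eqOn_Icc {A : Subring ℝ} {q : SL2 ℝ} (hqA : q ∈ entriesIn A)
    (hq : 2 < |Matrix.trace q.1|) {p₁ p₂ : ℝ} (hp : p₁ < p₂)
    (hd : ∀ y ∈ Icc p₁ p₂, mdenom q y ≠ 0) (hq₁ : moebius q p₁ = p₁)
    (hq₂ : moebius q p₂ = p₂) : ∃ k ∈ HGroup A, EqOn k (moebius q) (Icc p₁ p₂) := by
  have hcont := continuousOn_moebius hd
  have hmono : StrictMonoOn (moebius q) (Icc p₁ p₂) :=
    hcont.strictMonoOn_of_injOn_Icc hp.le (by rw [hq₁, hq₂]; exact hp.le) (injOn_moebius hd)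
  obtain ⟨k, hkq, hkid⟩ := exists_homeomorph_eqOn_Icc hp.le hmono hcont hq₁ hq₂
  have hends : ∀ p ∈ ({p₁, p₂} : Finset ℝ), p ∈ FixHyp A ∧ k p = p := by
    simp only [Finset.mem_insert, Finset.mem_singleton]
    rintro p (rfl | rfl)
    · have hp₁ := left_mem_Icc.2 hp.le
      exact ⟨⟨q, hqA, hq, hd _ hp₁, hq₁⟩, (hkq hp₁).trans hq₁⟩
    · have hp₂ := right_mem_Icc.2 hp.le
      exact ⟨⟨q, hqA, hq, hd _ hp₂, hq₂⟩, (hkq hp₂).trans hq₂⟩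
  refine ⟨k, mem_HGroup_of_isLocalPiece {p₁, p₂} hends fun y hy => ?_, hkq⟩
  simp only [Finset.mem_insert, Finset.mem_singleton, not_or] at hy
  by_cases hyI : y ∈ Icc p₁ p₂
  · exact ⟨q, hqA, isLocalPiece_of_eqOn isOpen_Ioo
      ⟨hyI.1.lt_of_ne (Ne.symm hy.1), hyI.2.lt_of_ne hy.2⟩ (hd y hyI)
      (hkq.mono Ioo_subset_Icc_self)⟩
  · exact ⟨1, one_entriesIn A, isLocalPiece_of_eqOn isClosed_Icc.isOpen_compl hyI
      (by simp [mdenom_one]) fun z hz => (hkid hz).trans (moebius_one z).symm⟩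

lemma exists_translate_fixedPoints {g : SL2 ℝ} (hc : g.1 1 0 ≠ 0) {x : ℝ}
    (hx : mdenom g x ≠ 0) :
    ∃ (t : ℤ) (p₁ p₂ : ℝ), p₁ < x ∧ x < p₂ ∧ (∀ y ∈ Icc p₁ p₂, mdenom g y ≠ 0) ∧
      moebius g p₁ = p₁ + t ∧ moebius g p₂ = p₂ + t := by
  obtain ⟨t, ht⟩ : ∃ t : ℤ, g.1 1 0 * mdenom g x * (x + t - moebius g x) < 0 := by
    rcases (mul_ne_zero hc hx).lt_or_gt with h | h
    · obtain ⟨t, ht⟩ := exists_int_gt (moebius g x - x)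
      exact ⟨t, mul_neg_of_neg_of_pos h (by linarith)⟩
    · obtain ⟨t, ht⟩ := exists_int_lt (moebius g x - x)
      exact ⟨t, mul_neg_of_pos_of_neg h (by linarith)⟩
  -- `Q = c · mdenom g · (id + t - moebius g)` off the pole, and `Q = 1` at the pole.
  set Q : ℝ → ℝ := fun y => g.1 1 0 * (mdenom g y * (y + t) - (g.1 0 0 * y + g.1 0 1))
  have hQ : ∀ y, mdenom g y ≠ 0 → Q y = g.1 1 0 * mdenom g y * (y + t - moebius g y) := by
    intro y hy
    simp only [Q, moebius]
    rw [mdenom] at hy ⊢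
    field_simp
  have hQpole : ∀ y, mdenom g y = 0 → Q y = 1 := by
    intro y hy
    simp only [Q]
    rw [mdenom] at hy ⊢
    linear_combination (g.1 1 0 * (y + t) - g.1 0 0) * hy + det_eq g
  obtain ⟨p₁, p₂, hx₁, hx₂, hfac⟩ := exists_factorization_of_quadratic_neg (x := x)
    (α := g.1 1 0 ^ 2) (β := g.1 1 0 * (g.1 1 1 + t * g.1 1 0 - g.1 0 0))
    (γ := g.1 1 0 * (t * g.1 1 1 - g.1 0 1))
    (by positivity) (by rw [← hQ x hx] at ht; convert ht using 1; simp only [Q, mdenom]; ring)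
  have hQfac : ∀ y, Q y = g.1 1 0 ^ 2 * (y - p₁) * (y - p₂) := fun y => by
    rw [← hfac]; simp only [Q, mdenom]; ring
  have hd : ∀ y ∈ Icc p₁ p₂, mdenom g y ≠ 0 := fun y hy hy0 => by
    have hQy := hQfac y
    rw [hQpole y hy0] at hQy
    linarith [mul_nonpos_of_nonneg_of_nonpos (mul_nonneg (sq_nonneg (g.1 1 0))
      (sub_nonneg.2 hy.1)) (sub_nonpos.2 hy.2)]
  have hfixed : ∀ p ∈ Icc p₁ p₂, Q p = 0 → moebius g p = p + t := fun p hp hQp => by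
    rw [hQ p (hd p hp)] at hQp
    linarith [(mul_eq_zero.1 hQp).resolve_left (mul_ne_zero hc (hd p hp))]
  refine ⟨t, p₁, p₂, hx₁, hx₂, hd, hfixed _ (left_mem_Icc.2 (hx₁.trans hx₂).le) ?_,
    hfixed _ (right_mem_Icc.2 (hx₁.trans hx₂).le) ?_⟩ <;> simp [hQfac]

theorem exists_mem_HGroup_eventually_eq {A : Subring ℝ} {g : SL2 ℝ} (hA : g ∈ entriesIn A)
    {x : ℝ} (hx : mdenom g x ≠ 0) : ∃ h ∈ HGroup A, ∀ᶠ y in 𝓝 x, h y = moebius g y := by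
  by_cases hc : g.1 1 0 = 0
  · exact ⟨affineHomeomorph g hc, affineHomeomorph_mem_HGroup hc hA, .of_forall fun _ => rfl⟩
  obtain ⟨t, p₁, p₂, hx₁, hx₂, hd, hg₁, hg₂⟩ := exists_translate_fixedPoints hc hx
  have hp := hx₁.trans hx₂
  set q := translation (-t) * g
  have hqA : q ∈ entriesIn A :=
    mul_entriesIn (translation_mem_entriesIn (A.neg_mem (intCast_mem A t))) hA
  have hqd : ∀ y ∈ Icc p₁ p₂, mdenom q y ≠ 0 := fun y hy => by
    rw [mdenom_translation_mul]; exact hd y hy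
  have hq₁ : moebius q p₁ = p₁ := by
    rw [moebius_translation_mul _ (hd _ (left_mem_Icc.2 hp.le)), hg₁]; ring
  have hq₂ : moebius q p₂ = p₂ := by
    rw [moebius_translation_mul _ (hd _ (right_mem_Icc.2 hp.le)), hg₂]; ring
  have hqtr := two_lt_abs_trace_of_fixedPoints (by rwa [translation_mul_entry_one]) hp.ne
    (hqd _ (left_mem_Icc.2 hp.le)) (hqd _ (right_mem_Icc.2 hp.le)) hq₁ hq₂
  obtain ⟨k, hk, hkq⟩ := exists_mem_HGroup_eqOn_Icc hqA hqtr hp hqd hq₁ hq₂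
  refine ⟨affineHomeomorph (translation t) (translation_entry_one_zero t) * k,
    mul_mem (affineHomeomorph_mem_HGroup (translation_entry_one_zero t)
    (translation_mem_entriesIn (intCast_mem A t))) hk, ?_⟩
  filter_upwards [Ioo_mem_nhds hx₁ hx₂] with y hy
  have hyI := Ioo_subset_Icc_self hy
  simp only [Homeomorph.mul_apply', affineHomeomorph_apply]
  rw [hkq hyI, moebius_translation, moebius_translation_mul _ (hd y hyI)]
  ring

end PP

open PP

/-- For every `g ∈ SL₂(ℝ)` and `x ∈ ℝ` with `g·x ≠ ∞`, there is a
piecewise-projective homeomorphism `h` of `ℝ` coinciding with (the projective action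
of) `g` on a neighbourhood of `x`; moreover `h` can be taken in `H(A)` whenever
`A < ℝ` is a unital subring containing the coefficients of `g`. -/
theorem cut_and_paste (g : SL2 ℝ) (x : ℝ) (hx : mdenom g x ≠ 0) :
    (∃ h : ℝ ≃ₜ ℝ, IsPiecewiseIn Set.univ h ∧ ∀ᶠ y in 𝓝 x, h y = moebius g y) ∧
    (∀ A : Subring ℝ, g ∈ entriesIn A →
      ∃ h : ℝ ≃ₜ ℝ, h ∈ HGroup A ∧ ∀ᶠ y in 𝓝 x, h y = moebius g y) := by
  refine ⟨?_, fun A hA => exists_mem_HGroup_eventually_eq hA hx⟩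
  obtain ⟨h, ⟨⟨B, hB⟩, -⟩, hev⟩ :=
    exists_mem_HGroup_eventually_eq (A := ⊤) (fun _ _ => Subring.mem_top _) hx
  exact ⟨h, ⟨B, fun y hy => (hB y hy).imp fun _ hg' => ⟨trivial, hg'.2⟩⟩, hev⟩
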